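/- Let q ≥ 1 and n ≥ 1, and let x_1, …, x_n be points of S^q. For 0 < ρ < 1 define the Poisson kernel ψ₂(t; ρ) := (1−ρ²)·(1 − 2ρt + ρ²)^{−(q+1)/2} for t ∈ [−1,1], B₂(ρ) := (∫_{-1}^{1} ψ₂(t; ρ) (1−t²)^{q/2−1} dt) / (∫_{-1}^{1} (1−t²)^{q/2−1} dt), and the Poisson kernel statistic T₂(ρ) := (2/n) Σ_{1 ≤ i < j ≤ n} ψ₂(⟨x_i, x_j⟩; ρ) − (n−1) B₂(ρ). Then, as ρ → 0⁺, (T₂(ρ) − 1 + (1+ρ)/(1−ρ)^q)/ρ converges to the Rayleigh statistic R_n = ((q+1)/n) Σ_{i,j=1}^{n} ⟨x_i, x_j⟩. -/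

import Mathlib

/-
At `ρ = 0` the kernel `ψ₂(·; 0)` is identically `1` and `B₂(0) = 1`, so the numerator
`T₂(ρ) - 1 + (1 + ρ)/(1 - ρ)^q` vanishes at `ρ = 0` and the limit is its derivative there.
Since `∂ρ ψ₂(t; ρ)` equals `(q + 1) t` at `ρ = 0`, each pair `i < j` contributes
`(q + 1) ⟨x_i, x_j⟩`; the derivative of `B₂` at `0` vanishes, being the integral of the odd
function `(q + 1) t` against the even weight `(1 - t²)^(q/2 - 1)`; and `(1 + ρ)/(1 - ρ)^q`
contributes `q + 1`, which accounts for the diagonal terms `⟨x_i, x_i⟩ = 1` of `R_n`.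
-/

open MeasureTheory Filter Topology Real Set Metric
open scoped Interval

theorem sum_sum_eq_two_nsmul_sum_lt_add_sum_diag {ι M : Type*} [Fintype ι] [LinearOrder ι]
    [AddCommMonoid M] (g : ι → ι → M) (hg : ∀ i j, g i j = g j i) :
    ∑ i, ∑ j, g i j =
      2 • ∑ p ∈ Finset.univ.filter (fun p : ι × ι => p.1 < p.2), g p.1 p.2 + ∑ i, g i i := by
  have hsplit : ∀ i j, g i j =
      ((if i < j then g i j else 0) + if j < i then g j i else 0) + if i = j then g i j else 0 := by
    intro i j
    rcases lt_trichotomy i j with h | rfl | h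
    · simp [h, h.not_gt, h.ne]
    · simp
    · simp [h, h.not_gt, h.ne', hg i j]
  conv_lhs => enter [2, i, 2, j]; rw [hsplit i j]
  simp only [Finset.sum_add_distrib, Finset.sum_ite_eq, Finset.mem_univ, if_true]
  rw [Finset.sum_comm (f := fun i j => if j < i then g j i else 0), Finset.sum_filter, two_nsmul,
    ← Fintype.sum_prod_type']

theorem intervalIntegral_eq_zero_of_odd {f : ℝ → ℝ} (hf : ∀ x, f (-x) = -f x) (a : ℝ) :
    ∫ x in -a..a, f x = 0 := by
  have h := intervalIntegral.integral_comp_neg (a := -a) (b := a) f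
  simp only [hf, intervalIntegral.integral_neg, neg_neg] at h
  linarith

theorem intervalIntegrable_one_sub_sq_rpow {r : ℝ} (hr : -1 < r) :
    IntervalIntegrable (fun t : ℝ => (1 - t ^ 2) ^ r) volume (-1) 1 := by
  have hfactor : ∀ t ∈ Icc (-1 : ℝ) 1, (1 - t ^ 2) ^ r = (1 + t) ^ r * (1 - t) ^ r := by
    intro t ht
    rw [← mul_rpow (by linarith [ht.1]) (by linarith [ht.2])]
    ring_nf
  have hleft : IntervalIntegrable (fun t : ℝ => (1 + t) ^ r * (1 - t) ^ r) volume (-1) 0 := by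
    refine IntervalIntegrable.mul_continuousOn ?_ ?_
    · simpa using (intervalIntegral.intervalIntegrable_rpow' hr (a := 0) (b := 1)).comp_add_left 1
    · refine ContinuousOn.rpow_const (by fun_prop) fun t ht => Or.inl ?_
      rw [uIcc_of_le (by norm_num)] at ht
      linarith [ht.2]
  have hright : IntervalIntegrable (fun t : ℝ => (1 + t) ^ r * (1 - t) ^ r) volume 0 1 := by
    refine IntervalIntegrable.continuousOn_mul ?_ ?_
    · simpa using
        ((intervalIntegral.intervalIntegrable_rpow' hr (a := 0) (b := 1)).comp_sub_left 1).symm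
    · refine ContinuousOn.rpow_const (by fun_prop) fun t ht => Or.inl ?_
      rw [uIcc_of_le (by norm_num)] at ht
      linarith [ht.1]
  refine (hleft.trans hright).congr fun t ht => (hfactor t ?_).symm
  rw [uIoc_of_le (by norm_num)] at ht
  exact Ioc_subset_Icc_self ht

theorem hasDerivAt_intervalIntegral_mul {F F' : ℝ → ℝ → ℝ} {w : ℝ → ℝ} {a b x₀ r : ℝ}
    (hw : IntervalIntegrable w volume a b)
    (hF : ∀ x ∈ ball x₀ r, ContinuousOn (F x) [[a, b]])
    (hF' : ContinuousOn (Function.uncurry F') (closedBall x₀ r ×ˢ [[a, b]]))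
    (hderiv : ∀ t ∈ [[a, b]], ∀ x ∈ ball x₀ r, HasDerivAt (F · t) (F' x t) x) (hr : 0 < r) :
    HasDerivAt (fun x => ∫ t in a..b, F x t * w t) (∫ t in a..b, F' x₀ t * w t) x₀ := by
  obtain ⟨C, hC⟩ :=
    ((isCompact_closedBall x₀ r).prod isCompact_uIcc).exists_bound_of_continuousOn hF'
  have hF'₀ : ContinuousOn (F' x₀) [[a, b]] :=
    hF'.comp (continuousOn_const.prodMk continuousOn_id) fun t ht =>
      ⟨mem_closedBall_self hr.le, ht⟩
  refine (intervalIntegral.hasDerivAt_integral_of_dominated_loc_of_deriv_le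
    (F := fun x t => F x t * w t) (F' := fun x t => F' x t * w t) (bound := fun t => C * ‖w t‖)
    (ball_mem_nhds x₀ hr) ?_ ?_ ?_ ?_ (hw.norm.const_mul C) ?_).2
  · filter_upwards [ball_mem_nhds x₀ hr] with x hx
    exact (intervalIntegrable_iff.mp (hw.continuousOn_mul (hF x hx))).aestronglyMeasurable
  · exact hw.continuousOn_mul (hF x₀ (mem_ball_self hr))
  · exact (intervalIntegrable_iff.mp (hw.continuousOn_mul hF'₀)).aestronglyMeasurable
  · refine ae_of_all _ fun t ht x hx => ?_
    rw [norm_mul]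
    exact mul_le_mul_of_nonneg_right
      (hC (x, t) ⟨ball_subset_closedBall hx, uIoc_subset_uIcc ht⟩) (norm_nonneg _)
  · exact ae_of_all _ fun t ht x hx => (hderiv t (uIoc_subset_uIcc ht) x hx).mul_const (w t)

theorem hasDerivAt_one_add_div_one_sub_pow (q : ℕ) :
    HasDerivAt (fun ρ : ℝ => (1 + ρ) / (1 - ρ) ^ q) ((q : ℝ) + 1) 0 := by
  have h := ((hasDerivAt_id (0 : ℝ)).const_add 1).div
    (((hasDerivAt_id (0 : ℝ)).const_sub 1).pow q) (by simp)
  exact h.congr_deriv (by simp [add_comm])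

noncomputable section

def spherePoissonKernel (q : ℕ) (ρ t : ℝ) : ℝ :=
  (1 - ρ ^ 2) * (1 - 2 * ρ * t + ρ ^ 2) ^ (-(((q : ℝ) + 1) / 2))

def spherePoissonKernelDeriv (q : ℕ) (ρ t : ℝ) : ℝ :=
  -2 * ρ * (1 - 2 * ρ * t + ρ ^ 2) ^ (-(((q : ℝ) + 1) / 2)) +
    (1 - ρ ^ 2) * (((q : ℝ) + 1) * (t - ρ)) *
      (1 - 2 * ρ * t + ρ ^ 2) ^ (-(((q : ℝ) + 1) / 2) - 1)

theorem one_sub_two_mul_add_sq_pos {ρ t : ℝ} (hρ : |ρ| < 1) (ht : |t| ≤ 1) :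
    0 < 1 - 2 * ρ * t + ρ ^ 2 := by
  have h : ρ * t ≤ |ρ| := (le_abs_self _).trans <| by
    rw [abs_mul]; exact mul_le_of_le_one_right (abs_nonneg ρ) ht
  nlinarith [sq_abs ρ, abs_nonneg ρ]

theorem hasDerivAt_spherePoissonKernel (q : ℕ) {ρ t : ℝ} (h : 0 < 1 - 2 * ρ * t + ρ ^ 2) :
    HasDerivAt (spherePoissonKernel q · t) (spherePoissonKernelDeriv q ρ t) ρ := by
  have hbase : HasDerivAt (fun ρ : ℝ => 1 - 2 * ρ * t + ρ ^ 2) (2 * ρ - 2 * t) ρ :=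
    ((((hasDerivAt_id ρ).const_mul 2).mul_const t).const_sub 1).add (hasDerivAt_pow 2 ρ)
      |>.congr_deriv (by norm_num; ring)
  refine (((hasDerivAt_pow 2 ρ).const_sub 1).mul
    (hbase.rpow_const (p := -(((q : ℝ) + 1) / 2)) (Or.inl h.ne'))).congr_deriv ?_
  rw [spherePoissonKernelDeriv]
  push_cast
  ring

theorem spherePoissonKernel_zero (q : ℕ) (t : ℝ) : spherePoissonKernel q 0 t = 1 := by
  simp [spherePoissonKernel]

theorem spherePoissonKernelDeriv_zero (q : ℕ) (t : ℝ) :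
    spherePoissonKernelDeriv q 0 t = ((q : ℝ) + 1) * t := by
  simp [spherePoissonKernelDeriv]

theorem hasDerivAt_spherePoissonKernel_zero (q : ℕ) (t : ℝ) :
    HasDerivAt (spherePoissonKernel q · t) (((q : ℝ) + 1) * t) 0 := by
  simpa [spherePoissonKernelDeriv_zero] using
    hasDerivAt_spherePoissonKernel q (ρ := 0) (t := t) (by norm_num)

theorem continuousOn_spherePoissonKernel (q : ℕ) {ρ : ℝ} (hρ : |ρ| < 1) :
    ContinuousOn (spherePoissonKernel q ρ) (Icc (-1) 1) := by
  refine continuousOn_const.mul (ContinuousOn.rpow_const (by fun_prop) fun t ht => Or.inl ?_)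
  exact (one_sub_two_mul_add_sq_pos hρ (abs_le.mpr ht)).ne'

theorem continuousOn_spherePoissonKernelDeriv (q : ℕ) {r : ℝ} (hr : r < 1) :
    ContinuousOn (Function.uncurry (spherePoissonKernelDeriv q))
      (closedBall 0 r ×ˢ Icc (-1) 1) := by
  have hbase : ∀ p ∈ closedBall (0 : ℝ) r ×ˢ Icc (-1 : ℝ) 1, 1 - 2 * p.1 * p.2 + p.1 ^ 2 ≠ 0 :=
    fun p hp => (one_sub_two_mul_add_sq_pos ((mem_closedBall_zero_iff.mp hp.1).trans_lt hr)
      (abs_le.mpr hp.2)).ne'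
  have hpow : ∀ s : ℝ, ContinuousOn (fun p : ℝ × ℝ => (1 - 2 * p.1 * p.2 + p.1 ^ 2) ^ s)
      (closedBall 0 r ×ˢ Icc (-1) 1) :=
    fun s => ContinuousOn.rpow_const (by fun_prop) fun p hp => Or.inl (hbase p hp)
  unfold spherePoissonKernelDeriv Function.uncurry
  fun_prop

def gegenbauerWeight (q : ℕ) (t : ℝ) : ℝ := (1 - t ^ 2) ^ ((q : ℝ) / 2 - 1)

/-- `B₂(ρ)`: up to normalisation, `(1 - t²)^(q/2 - 1)` is the density of `⟨x, e⟩` for `x`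
uniform on `S^q`, so this is the mean of `ψ₂(⟨x, e⟩; ρ)`. -/
def spherePoissonKernelMean (q : ℕ) (ρ : ℝ) : ℝ :=
  (∫ t in (-1 : ℝ)..1, spherePoissonKernel q ρ t * gegenbauerWeight q t) /
    ∫ t in (-1 : ℝ)..1, gegenbauerWeight q t

theorem intervalIntegrable_gegenbauerWeight {q : ℕ} (hq : 1 ≤ q) :
    IntervalIntegrable (gegenbauerWeight q) volume (-1) 1 :=
  intervalIntegrable_one_sub_sq_rpow <| by
    have : (1 : ℝ) ≤ q := by exact_mod_cast hq
    linarith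

theorem integral_gegenbauerWeight_pos {q : ℕ} (hq : 1 ≤ q) :
    0 < ∫ t in (-1 : ℝ)..1, gegenbauerWeight q t :=
  intervalIntegral.intervalIntegral_pos_of_pos_on (intervalIntegrable_gegenbauerWeight hq)
    (fun t ht => rpow_pos_of_pos (by nlinarith [ht.1, ht.2]) _) (by norm_num)

theorem spherePoissonKernelMean_zero {q : ℕ} (hq : 1 ≤ q) : spherePoissonKernelMean q 0 = 1 := by
  simp [spherePoissonKernelMean, spherePoissonKernel_zero, (integral_gegenbauerWeight_pos hq).ne']

theorem hasDerivAt_spherePoissonKernelMean_zero {q : ℕ} (hq : 1 ≤ q) :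
    HasDerivAt (spherePoissonKernelMean q) 0 0 := by
  have hI : [[(-1 : ℝ), 1]] = Icc (-1) 1 := uIcc_of_le (by norm_num)
  have hball : ∀ {ρ : ℝ}, ρ ∈ ball 0 (1 / 2) → |ρ| < 1 := fun hρ => by
    rw [mem_ball_zero_iff, norm_eq_abs] at hρ; linarith
  have hnum := hasDerivAt_intervalIntegral_mul (intervalIntegrable_gegenbauerWeight hq)
    (by rw [hI]; exact fun ρ hρ => continuousOn_spherePoissonKernel q (hball hρ))
    (by rw [hI]; exact continuousOn_spherePoissonKernelDeriv q (by norm_num))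
    (by rw [hI]; exact fun t ht ρ hρ =>
      hasDerivAt_spherePoissonKernel q (one_sub_two_mul_add_sq_pos (hball hρ) (abs_le.mpr ht)))
    (by norm_num : (0 : ℝ) < 1 / 2)
  have hodd : ∫ t in (-1 : ℝ)..1, spherePoissonKernelDeriv q 0 t * gegenbauerWeight q t = 0 := by
    simp only [spherePoissonKernelDeriv_zero]
    exact intervalIntegral_eq_zero_of_odd (fun t => by simp [gegenbauerWeight]) 1
  have hmean := hnum.div_const (∫ t in (-1 : ℝ)..1, gegenbauerWeight q t)
  rwa [hodd, zero_div] at hmean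

end

/-- Proposition 2: as `ρ → 0⁺`, the (monotonically transformed) Poisson kernel statistic
converges to the Rayleigh statistic. -/
theorem poisson_kernel_tendsto_rayleigh (q n : ℕ) (hq : 1 ≤ q) (hn : 1 ≤ n)
    (x : Fin n → EuclideanSpace ℝ (Fin (q + 1))) (hx : ∀ i, ‖x i‖ = 1) :
    Tendsto (fun ρ : ℝ =>
        (((2 / n) * ∑ p ∈ Finset.univ.filter (fun p : Fin n × Fin n => p.1 < p.2),
              (1 - ρ ^ 2) *
                (1 - 2 * ρ * (inner ℝ (x p.1) (x p.2) : ℝ) + ρ ^ 2) ^ (-(((q : ℝ) + 1) / 2))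
            - ((n : ℝ) - 1) *
              ((∫ t in (-1 : ℝ)..1,
                  (1 - ρ ^ 2) * (1 - 2 * ρ * t + ρ ^ 2) ^ (-(((q : ℝ) + 1) / 2)) *
                    (1 - t ^ 2) ^ ((q : ℝ) / 2 - 1)) /
                (∫ t in (-1 : ℝ)..1, (1 - t ^ 2) ^ ((q : ℝ) / 2 - 1))))
          - 1 + (1 + ρ) / (1 - ρ) ^ q) / ρ)
      (𝓝[>] 0)
      (𝓝 ((((q : ℝ) + 1) / n) * ∑ i : Fin n, ∑ j : Fin n, (inner ℝ (x i) (x j) : ℝ))) := by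
  set P := Finset.univ.filter (fun p : Fin n × Fin n => p.1 < p.2)
  set τ : Fin n × Fin n → ℝ := fun p => inner ℝ (x p.1) (x p.2)
  set T : ℝ → ℝ := fun ρ => (2 / n) * ∑ p ∈ P, spherePoissonKernel q ρ (τ p) -
    ((n : ℝ) - 1) * spherePoissonKernelMean q ρ - 1 + (1 + ρ) / (1 - ρ) ^ q
  have hn0 : (n : ℝ) ≠ 0 := Nat.cast_ne_zero.mpr (by omega)
  have hpairs : ∀ g : Fin n → Fin n → ℝ, (∀ i j, g i j = g j i) →
      ∑ i, ∑ j, g i j = 2 * ∑ p ∈ P, g p.1 p.2 + ∑ i, g i i := fun g hg => by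
    rw [sum_sum_eq_two_nsmul_sum_lt_add_sum_diag g hg, two_nsmul, two_mul]
  have hgram : ∑ i, ∑ j, inner ℝ (x i) (x j) = 2 * ∑ p ∈ P, τ p + n := by
    simp [hpairs _ fun i j => real_inner_comm (x j) (x i), hx, τ]
  have hcard : 2 * (P.card : ℝ) = n * (n - 1) := by
    have h := hpairs (fun _ _ => (1 : ℝ)) fun _ _ => rfl
    simp only [Finset.sum_const, Finset.card_univ, Fintype.card_fin, nsmul_eq_mul, mul_one] at h
    linear_combination -h
  have hT0 : T 0 = 0 := by
    simp only [T, spherePoissonKernel_zero, spherePoissonKernelMean_zero hq, Finset.sum_const,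
      nsmul_eq_mul, mul_one, add_zero, sub_zero, one_pow, div_one, sub_add_cancel]
    rw [div_mul_eq_mul_div, hcard, mul_div_cancel_left₀ _ hn0, sub_self]
  have hT : HasDerivAt T
      ((2 / n) * ∑ p ∈ P, ((q : ℝ) + 1) * τ p - ((n : ℝ) - 1) * 0 + ((q : ℝ) + 1)) 0 :=
    ((((HasDerivAt.fun_sum fun p _ => hasDerivAt_spherePoissonKernel_zero q (τ p)).const_mul _).sub
      ((hasDerivAt_spherePoissonKernelMean_zero hq).const_mul _)).sub_const 1).add
      (hasDerivAt_one_add_div_one_sub_pow q)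
  have hlim := hT.tendsto_slope_zero_right
  simp only [zero_add, hT0, sub_zero, smul_eq_mul] at hlim
  convert hlim using 2 with ρ
  · exact div_eq_inv_mul _ _
  · rw [hgram, ← Finset.mul_sum]
    field_simp
    ring
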